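/- arXiv:2507.02449 — 2 statements merged into one kernel-verified Lean document; each statement's English description precedes it below -/
import Mathlib

section
/- If two symmetric positive semidefinite matrices A and B satisfy a Schatten-2 (Hilbert–Schmidt) bound |A−B| ≤ C, then their positive square roots satisfy |A^{1/2} − B^{1/2}|² ≤ ‖A−B‖_Tr ≤ √d · |A−B|, where ‖·‖_Tr is the trace (Schatten-1) norm on d×d matrices. -/
noncomputable section

section

open scoped ComplexOrder

/-- The square root of a positive semidefinite matrix, as defined in Mathlib (Dec 2024). -/
def Matrix.PosSemidef.sqrt {n 𝕜 : Type*} [Fintype n] [RCLike 𝕜] [DecidableEq n]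
    {A : Matrix n n 𝕜} (hA : A.PosSemidef) : Matrix n n 𝕜 :=
  hA.1.eigenvectorUnitary.1 * Matrix.diagonal ((↑) ∘ (√·) ∘ hA.1.eigenvalues) *
    (star hA.1.eigenvectorUnitary : Matrix n n 𝕜)

end

/-- Frobenius (Hilbert–Schmidt, Schatten-2) norm of a real matrix. -/
def frobNorm {d : ℕ} (M : Matrix (Fin d) (Fin d) ℝ) : ℝ :=
  Real.sqrt (∑ i, ∑ j, (M i j) ^ 2)

/-- Trace (Schatten-1) norm of a real matrix: the trace of `√(MᴴM)`. -/
def traceNorm {d : ℕ} (M : Matrix (Fin d) (Fin d) ℝ) : ℝ :=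
  (Matrix.posSemidef_conjTranspose_mul_self M).sqrt.trace

section Aux
open Matrix
variable {d : ℕ} {M : Matrix (Fin d) (Fin d) ℝ} (hM : M.IsHermitian)

/-- Apply a function to a Hermitian matrix via its spectral decomposition. -/
def af (hM : M.IsHermitian) (g : ℝ → ℝ) : Matrix (Fin d) (Fin d) ℝ :=
  (hM.eigenvectorUnitary : Matrix (Fin d) (Fin d) ℝ) * diagonal (g ∘ hM.eigenvalues) *
    star (hM.eigenvectorUnitary : Matrix (Fin d) (Fin d) ℝ)

lemma af_id : af hM (fun t => t) = M := by
  have := hM.spectral_theorem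
  rw [RCLike.ofReal_real_eq_id] at this
  simpa [af, Function.comp_def] using this.symm

lemma af_mul (g h : ℝ → ℝ) : af hM g * af hM h = af hM (fun t => g t * h t) := by
  have hU : star (hM.eigenvectorUnitary : Matrix (Fin d) (Fin d) ℝ) *
      (hM.eigenvectorUnitary : Matrix (Fin d) (Fin d) ℝ) = 1 :=
    Unitary.coe_star_mul_self _
  simp only [af, Matrix.mul_assoc]
  rw [← Matrix.mul_assoc (star _), hU, Matrix.one_mul,
    ← Matrix.mul_assoc (diagonal _), diagonal_mul_diagonal]
  rfl

lemma trace_af (g : ℝ → ℝ) : (af hM g).trace = ∑ i, g (hM.eigenvalues i) := by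
  have hU : star (hM.eigenvectorUnitary : Matrix (Fin d) (Fin d) ℝ) *
      (hM.eigenvectorUnitary : Matrix (Fin d) (Fin d) ℝ) = 1 :=
    Unitary.coe_star_mul_self _
  rw [af, Matrix.trace_mul_comm, ← Matrix.mul_assoc, hU, Matrix.one_mul, Matrix.trace_diagonal]
  rfl

lemma af_isHermitian (g : ℝ → ℝ) : (af hM g).IsHermitian := by
  unfold af
  unfold Matrix.IsHermitian
  rw [conjTranspose_mul, conjTranspose_mul, star_eq_conjTranspose, conjTranspose_conjTranspose,
    diagonal_conjTranspose, Matrix.mul_assoc]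
  congr 1

lemma af_posSemidef (g : ℝ → ℝ) (hg : ∀ i, 0 ≤ g (hM.eigenvalues i)) :
    (af hM g).PosSemidef := by
  rw [af, star_eq_conjTranspose]
  exact (posSemidef_diagonal_iff.mpr fun i => hg i).mul_mul_conjTranspose_same _

lemma trace_mul_af (N : Matrix (Fin d) (Fin d) ℝ) (g : ℝ → ℝ) :
    (N * af hM g).trace = ∑ i, g (hM.eigenvalues i) *
      ((star (hM.eigenvectorUnitary : Matrix (Fin d) (Fin d) ℝ) * N *
        (hM.eigenvectorUnitary : Matrix (Fin d) (Fin d) ℝ)) i i) := by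
  rw [af, ← Matrix.mul_assoc, ← Matrix.mul_assoc,
    Matrix.trace_mul_cycle (N * (hM.eigenvectorUnitary : Matrix (Fin d) (Fin d) ℝ))
      (diagonal (g ∘ hM.eigenvalues)) _, ← Matrix.mul_assoc, Matrix.mul_assoc (star _) N]
  rw [Matrix.trace]
  simp only [Matrix.diag, Matrix.mul_diagonal, Function.comp]
  exact Finset.sum_congr rfl fun i _ => mul_comm _ _

lemma psd_diag_nonneg {N : Matrix (Fin d) (Fin d) ℝ} (hN : N.PosSemidef) (i : Fin d) :
    0 ≤ N i i := by
  have := hN.2 (Finsupp.single i 1)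
  simpa [Finsupp.sum_single_index] using this

lemma star_af_mul (g : ℝ → ℝ) :
    star (hM.eigenvectorUnitary : Matrix (Fin d) (Fin d) ℝ) * (af hM g) *
      (hM.eigenvectorUnitary : Matrix (Fin d) (Fin d) ℝ) = diagonal (g ∘ hM.eigenvalues) := by
  have hU : star (hM.eigenvectorUnitary : Matrix (Fin d) (Fin d) ℝ) *
      (hM.eigenvectorUnitary : Matrix (Fin d) (Fin d) ℝ) = 1 :=
    Unitary.coe_star_mul_self _
  rw [af, ← Matrix.mul_assoc, ← Matrix.mul_assoc, hU, Matrix.one_mul, Matrix.mul_assoc, hU,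
    Matrix.mul_one]

lemma real_sign_mul_self (t : ℝ) : Real.sign t * t = |t| := by
  rcases lt_trichotomy t 0 with h | h | h
  · rw [Real.sign_of_neg h, abs_of_neg h]; ring
  · simp [h]
  · rw [Real.sign_of_pos h, abs_of_pos h]; ring

lemma real_sign_abs_le (t : ℝ) : |Real.sign t| ≤ 1 := by
  rcases lt_trichotomy t 0 with h | h | h
  · rw [Real.sign_of_neg h]; norm_num
  · simp [h]
  · rw [Real.sign_of_pos h]; norm_num

/-- Frobenius norm squared of a Hermitian matrix is the sum of squared eigenvalues. -/
lemma herm_frob_sq : ∑ i, ∑ j, (M i j) ^ 2 = ∑ i, (hM.eigenvalues i) ^ 2 := by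
  have h1 : ∑ i, ∑ j, (M i j) ^ 2 = (M * M).trace := by
    rw [Matrix.trace]
    refine Finset.sum_congr rfl fun i _ => ?_
    rw [Matrix.diag, Matrix.mul_apply]
    refine Finset.sum_congr rfl fun j _ => ?_
    have : M j i = M i j := by
      have := congrFun (congrFun hM i) j
      simpa [Matrix.conjTranspose_apply] using this
    rw [this]; ring
  rw [h1]
  have h2 : M * M = af hM (fun t => t * t) := by
    rw [← af_mul hM, af_id hM]
  rw [h2, trace_af hM]
  exact Finset.sum_congr rfl fun i _ => (sq _).symm

lemma af_congr {A : Matrix (Fin d) (Fin d) ℝ} (hA : A.IsHermitian) (g h : ℝ → ℝ)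
    (H : ∀ i, g (hA.eigenvalues i) = h (hA.eigenvalues i)) : af hA g = af hA h := by
  unfold af
  rw [show (g ∘ hA.eigenvalues) = (h ∘ hA.eigenvalues) from funext H]

lemma Matrix.PosSemidef.sqrt_eq_af {A : Matrix (Fin d) (Fin d) ℝ} (hA : A.PosSemidef) :
    hA.sqrt = af hA.1 Real.sqrt := rfl

lemma Matrix.PosSemidef.sqrt_mul_self {A : Matrix (Fin d) (Fin d) ℝ} (hA : A.PosSemidef) :
    hA.sqrt * hA.sqrt = A := by
  rw [hA.sqrt_eq_af, af_mul]
  conv_rhs => rw [← af_id hA.1]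
  exact af_congr hA.1 _ _ fun i => Real.mul_self_sqrt (hA.eigenvalues_nonneg i)

lemma Matrix.PosSemidef.posSemidef_sqrt {A : Matrix (Fin d) (Fin d) ℝ} (hA : A.PosSemidef) :
    hA.sqrt.PosSemidef := by
  rw [hA.sqrt_eq_af]
  exact af_posSemidef _ _ (fun i => Real.sqrt_nonneg _)

section
open scoped MatrixOrder

lemma Matrix.PosSemidef.eq_sqrt_of_sq_eq {A : Matrix (Fin d) (Fin d) ℝ} (hA : A.PosSemidef)
    (B : Matrix (Fin d) (Fin d) ℝ) (hB : B.PosSemidef) (h : B ^ 2 = A) : B = hA.sqrt := by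
  have h1 := hB.nonneg
  have h2 := hA.posSemidef_sqrt.nonneg
  exact (CFC.mul_self_eq_mul_self_iff B hA.sqrt h1 h2).mp
    (by rw [← sq, h, hA.sqrt_mul_self])

end

/-- Trace norm of a Hermitian matrix is the sum of the absolute eigenvalues. -/
lemma herm_traceNorm : (Matrix.posSemidef_conjTranspose_mul_self M).sqrt.trace
    = ∑ i, |hM.eigenvalues i| := by
  have habs : af hM (fun t => |t|) = (Matrix.posSemidef_conjTranspose_mul_self M).sqrt := by
    apply Matrix.PosSemidef.eq_sqrt_of_sq_eq
    · exact af_posSemidef hM _ (fun i => abs_nonneg _)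
    · rw [sq, af_mul hM]
      have : (fun t => |t| * |t|) = fun t : ℝ => t * t := by
        funext t; rw [← abs_mul, abs_mul_self]
      rw [this, ← af_mul hM, af_id hM, hM.eq]
  rw [← habs, trace_af hM]

end Aux

open Matrix

/-- Powers–Størmer: for symmetric positive semidefinite matrices `A`, `B` with
`|A - B| ≤ C` in Hilbert–Schmidt norm, the square roots satisfy
`|√A - √B|² ≤ ‖A - B‖_Tr ≤ √d · |A - B|`. -/
theorem powers_stormer {d : ℕ} (A B : Matrix (Fin d) (Fin d) ℝ)
    (hAsymm : A.IsSymm) (hBsymm : B.IsSymm)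
    (hA : A.PosSemidef) (hB : B.PosSemidef)
    (C : ℝ) (hC : frobNorm (A - B) ≤ C) :
    frobNorm (hA.sqrt - hB.sqrt) ^ 2 ≤ traceNorm (A - B) ∧
    traceNorm (A - B) ≤ Real.sqrt d * frobNorm (A - B) := by
  clear hC
  set X := hA.sqrt - hB.sqrt with hXdef
  set Y := hA.sqrt + hB.sqrt with hYdef
  have hX : X.IsHermitian := hA.posSemidef_sqrt.1.sub hB.posSemidef_sqrt.1
  have hMh : (A - B).IsHermitian := hA.1.sub hB.1
  set U : Matrix (Fin d) (Fin d) ℝ := (hX.eigenvectorUnitary : Matrix (Fin d) (Fin d) ℝ) with hU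
  set V : Matrix (Fin d) (Fin d) ℝ := (hMh.eigenvectorUnitary : Matrix (Fin d) (Fin d) ℝ) with hV
  set lam := hX.eigenvalues with hlam
  set mu := hMh.eigenvalues with hmu
  set S := af hX Real.sign with hS
  -- diagonalization of X
  have hdiagX : star U * X * U = diagonal lam := by
    have := star_af_mul hX (fun t => t)
    rw [af_id hX] at this
    exact this
  -- X * Y + Y * X = (A-B) + (A-B)
  have hXY : X * Y + Y * X = (A - B) + (A - B) := by
    rw [hXdef, hYdef]
    simp only [Matrix.sub_mul, Matrix.mul_add, Matrix.add_mul, Matrix.mul_sub,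
      hA.sqrt_mul_self, hB.sqrt_mul_self]
    abel
  -- S * X = X * S = af |·|
  have hSX : S * X = af hX (fun t => |t|) := by
    have h := af_mul hX Real.sign (fun t => t)
    rw [af_id hX] at h
    rw [hS, h]
    exact congrArg _ (funext fun t => real_sign_mul_self t)
  have hXS : X * S = af hX (fun t => |t|) := by
    have h := af_mul hX (fun t => t) Real.sign
    rw [af_id hX] at h
    rw [hS, h]
    exact congrArg _ (funext fun t => by rw [mul_comm]; exact real_sign_mul_self t)
  -- trace ((A-B) * S) = ∑ |λ i| * (star U * Y * U) i i
  have htr1 : ((A - B) * S).trace = ∑ i, |lam i| * (star U * Y * U) i i := by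
    have h2 : ((A - B) * S).trace + ((A - B) * S).trace
        = (Y * af hX (fun t => |t|)).trace + (Y * af hX (fun t => |t|)).trace := by
      rw [← Matrix.trace_add, ← Matrix.add_mul, ← hXY, Matrix.add_mul, Matrix.trace_add]
      congr 1
      · rw [Matrix.trace_mul_cycle X Y S, hSX, Matrix.trace_mul_comm]
      · rw [Matrix.mul_assoc, hXS]
    have h3 : ((A - B) * S).trace = (Y * af hX (fun t => |t|)).trace := by linarith
    rw [h3, trace_mul_af hX Y]
  -- the diagonal entries of star U * Y * U dominate |λ i|
  have hdom : ∀ i, |lam i| ≤ (star U * Y * U) i i := by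
    intro i
    have hp : ((star U * (Y + X) * U)) i i = (star U * Y * U) i i + lam i := by
      rw [Matrix.mul_add, Matrix.add_mul]
      change (star U * Y * U + star U * X * U) i i = _
      rw [hdiagX]
      simp [Matrix.add_apply]
    have hm : ((star U * (Y - X) * U)) i i = (star U * Y * U) i i - lam i := by
      rw [Matrix.mul_sub, Matrix.sub_mul]
      change (star U * Y * U - star U * X * U) i i = _
      rw [hdiagX]
      simp [Matrix.sub_apply]
    have hYXpos : (Y + X).PosSemidef := by
      have : Y + X = hA.sqrt + hA.sqrt := by rw [hXdef, hYdef]; abel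
      rw [this]
      exact hA.posSemidef_sqrt.add hA.posSemidef_sqrt
    have hYXpos' : (Y - X).PosSemidef := by
      have : Y - X = hB.sqrt + hB.sqrt := by rw [hXdef, hYdef]; abel
      rw [this]
      exact hB.posSemidef_sqrt.add hB.posSemidef_sqrt
    have h1 : 0 ≤ (star U * Y * U) i i + lam i := by
      rw [← hp]
      exact psd_diag_nonneg (hYXpos.conjTranspose_mul_mul_same U) i
    have h2 : 0 ≤ (star U * Y * U) i i - lam i := by
      rw [← hm]
      exact psd_diag_nonneg (hYXpos'.conjTranspose_mul_mul_same U) i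
    rw [abs_le]
    constructor <;> linarith
  -- Step 1 lower piece : ∑ λ² ≤ trace ((A-B) * S)
  have hstep1 : ∑ i, (lam i) ^ 2 ≤ ((A - B) * S).trace := by
    rw [htr1]
    refine Finset.sum_le_sum fun i _ => ?_
    calc (lam i) ^ 2 = |lam i| * |lam i| := by rw [← abs_mul, abs_mul_self, sq]
    _ ≤ |lam i| * (star U * Y * U) i i :=
        mul_le_mul_of_nonneg_left (hdom i) (abs_nonneg _)
  -- Step 2 : trace ((A-B) * S) ≤ ∑ |μ j|
  have hstep2 : ((A - B) * S).trace ≤ ∑ j, |mu j| := by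
    have htr2 : ((A - B) * S).trace = ∑ j, mu j * (star V * S * V) j j := by
      rw [Matrix.trace_mul_comm, ← af_id hMh (M := A - B), trace_mul_af hMh S]
    rw [htr2]
    -- bound the diagonal entries of star V * S * V by 1
    have hW : star (star U * V) * (star U * V) = 1 := by
      have hUU : U * star U = 1 := Matrix.mem_unitaryGroup_iff.mp hX.eigenvectorUnitary.2
      have hVV : star V * V = 1 := Matrix.mem_unitaryGroup_iff'.mp hMh.eigenvectorUnitary.2
      rw [Matrix.star_mul, star_star, Matrix.mul_assoc, ← Matrix.mul_assoc U, hUU,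
        Matrix.one_mul, hVV]
    have hQ : star V * S * V
        = star (star U * V) * diagonal (Real.sign ∘ lam) * (star U * V) := by
      rw [Matrix.star_mul, star_star, hS, af]
      simp only [Matrix.mul_assoc]
      rfl
    have hbound : ∀ j, |(star V * S * V) j j| ≤ 1 := by
      intro j
      rw [hQ]
      set W := star U * V with hWdef
      have hentry : (star W * diagonal (Real.sign ∘ lam) * W) j j
          = ∑ i, Real.sign (lam i) * (W i j) ^ 2 := by
        rw [Matrix.mul_apply]
        refine Finset.sum_congr rfl fun i _ => ?_
        rw [Matrix.mul_apply]
        rw [Finset.sum_eq_single i]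
        · simp [Matrix.diagonal_apply_eq, Matrix.star_apply, Function.comp, sq]
          ring
        · intro k _ hk
          exact mul_eq_zero_of_right _ (Matrix.diagonal_apply_ne _ hk)
        · simp
      have hone : ∑ i, (W i j) ^ 2 = 1 := by
        have := congrFun (congrFun hW j) j
        rw [Matrix.mul_apply] at this
        rw [Matrix.one_apply_eq] at this
        rw [← this]
        refine Finset.sum_congr rfl fun i _ => ?_
        simp [Matrix.star_apply, sq]
      rw [hentry]
      calc |∑ i, Real.sign (lam i) * (W i j) ^ 2|
          ≤ ∑ i, |Real.sign (lam i) * (W i j) ^ 2| := Finset.abs_sum_le_sum_abs _ _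
        _ ≤ ∑ i, (W i j) ^ 2 := by
            refine Finset.sum_le_sum fun i _ => ?_
            rw [abs_mul, abs_of_nonneg (sq_nonneg (W i j))]
            exact mul_le_of_le_one_left (sq_nonneg _) (real_sign_abs_le _)
        _ = 1 := hone
    refine Finset.sum_le_sum fun j _ => ?_
    calc mu j * (star V * S * V) j j ≤ |mu j * (star V * S * V) j j| := le_abs_self _
      _ = |mu j| * |(star V * S * V) j j| := abs_mul _ _
      _ ≤ |mu j| * 1 := mul_le_mul_of_nonneg_left (hbound j) (abs_nonneg _)
      _ = |mu j| := mul_one _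
  -- assemble
  have hfrobX : frobNorm X ^ 2 = ∑ i, (lam i) ^ 2 := by
    rw [frobNorm, Real.sq_sqrt (Finset.sum_nonneg fun i _ =>
      Finset.sum_nonneg fun j _ => sq_nonneg (X i j))]
    exact herm_frob_sq hX
  have htraceNormAB : traceNorm (A - B) = ∑ j, |mu j| := herm_traceNorm hMh
  constructor
  · rw [hfrobX, htraceNormAB]
    exact le_trans hstep1 hstep2
  · rw [htraceNormAB]
    have hfrobAB : frobNorm (A - B) = Real.sqrt (∑ j, (mu j) ^ 2) := by
      rw [frobNorm, herm_frob_sq hMh]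
    rw [hfrobAB]
    have hcs : (∑ j, |mu j|) ^ 2 ≤ (d : ℝ) * ∑ j, (mu j) ^ 2 := by
      have h := Finset.sum_mul_sq_le_sq_mul_sq Finset.univ (fun _ : Fin d => (1 : ℝ))
        (fun j => |mu j|)
      simpa [sq_abs, Finset.card_univ] using h
    calc ∑ j, |mu j| = Real.sqrt ((∑ j, |mu j|) ^ 2) :=
          (Real.sqrt_sq (Finset.sum_nonneg fun j _ => abs_nonneg _)).symm
      _ ≤ Real.sqrt ((d : ℝ) * ∑ j, (mu j) ^ 2) := Real.sqrt_le_sqrt hcs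
      _ = Real.sqrt d * Real.sqrt (∑ j, (mu j) ^ 2) := Real.sqrt_mul (Nat.cast_nonneg d) _
end
end

section
/- Let X: [0,T] → ℝ^d be α-Hölder with 1/3 < α < β < 1/2. Then the canonical embedding of the space of controlled rough paths D_X^{2β}([0,T];ℝ^d) into D_X^{2α}([0,T];ℝ^d) is compact: every sequence bounded in the 2β-controlled norm has a subsequence converging in the 2α-controlled norm to an element of D_X^{2α}. -/
open Set Filter Topology BoundedContinuousFunction

set_option synthInstance.maxHeartbeats 1000000
set_option maxHeartbeats 2000000

noncomputable section

abbrev Ed (d : ℕ) := EuclideanSpace ℝ (Fin d)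

/-- The Gubinelli remainder of a controlled path `(Y, Y')` with respect to `X`. -/
def remainder {d : ℕ} (X : ℝ → Ed d) (Y : ℝ → Ed d)
    (Y' : ℝ → (Ed d →L[ℝ] Ed d)) (s t : ℝ) : Ed d :=
  Y t - Y s - Y' s (X t - X s)

lemma rpow_abs_tendsto (C a x : ℝ) (ha : 0 < a) :
    Tendsto (fun y : ℝ => C * |y - x| ^ a) (𝓝 x) (𝓝 0) := by
  have h1 : ContinuousAt (fun u : ℝ => u ^ a) (0 : ℝ) :=
    Real.continuousAt_rpow_const 0 a (Or.inr ha.le)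
  have h2 : Tendsto (fun y : ℝ => |y - x|) (𝓝 x) (𝓝 0) := by
    have : Continuous fun y : ℝ => |y - x| := (continuous_id.sub continuous_const).abs
    have h := this.continuousAt (x := x)
    unfold ContinuousAt at h
    simpa using h
  have h3 : Tendsto (fun y : ℝ => |y - x| ^ a) (𝓝 x) (𝓝 0) := by
    have := h1.tendsto.comp h2
    simpa [Function.comp_def, Real.zero_rpow ha.ne'] using this
  simpa using h3.const_mul C

lemma continuousOn_of_holder {E : Type*} [NormedAddCommGroup E] {g : ℝ → E} {s : Set ℝ}
    {C a : ℝ} (ha : 0 < a)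
    (h : ∀ x ∈ s, ∀ y ∈ s, ‖g y - g x‖ ≤ C * |y - x| ^ a) : ContinuousOn g s := by
  intro x hx
  have h1 : Tendsto (fun y : ℝ => C * |y - x| ^ a) (𝓝[s] x) (𝓝 0) :=
    (rpow_abs_tendsto C a x ha).mono_left nhdsWithin_le_nhds
  have h2 : Tendsto (fun y => g y - g x) (𝓝[s] x) (𝓝 0) := by
    refine squeeze_zero_norm' ?_ h1
    filter_upwards [self_mem_nhdsWithin] with y hy using h x hx y hy
  have h3 := h2.add (tendsto_const_nhds (x := g x))
  have h4 : Tendsto (fun y => g y) (𝓝[s] x) (𝓝 (g x)) := by simpa using h3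
  exact h4

lemma rpow_exp_le (T u a b : ℝ) (hu : 0 ≤ u) (huT : u ≤ T) (ha : 0 < a)
    (hab : a ≤ b) (hb1 : b ≤ a + 1) : u ^ b ≤ max 1 T * u ^ a := by
  rcases eq_or_lt_of_le hu with h0 | h0
  · rw [← h0, Real.zero_rpow (by intro h; rw [h] at hab; linarith : b ≠ 0),
      Real.zero_rpow ha.ne', mul_zero]
  · have hQ1 : (1:ℝ) ≤ max 1 T := le_max_left _ _
    have e : u ^ b = u ^ (b - a) * u ^ a := by
      rw [← Real.rpow_add h0]; ring_nf
    rw [e]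
    have h2 : u ^ (b - a) ≤ (max 1 T) ^ (b - a) :=
      Real.rpow_le_rpow hu (le_trans huT (le_max_right _ _)) (by linarith)
    have h3 : (max 1 T) ^ (b - a) ≤ max 1 T := by
      calc (max 1 T) ^ (b - a) ≤ (max 1 T) ^ (1:ℝ) :=
            Real.rpow_le_rpow_of_exponent_le hQ1 (by linarith)
        _ = max 1 T := Real.rpow_one _
    exact mul_le_mul (h2.trans h3) le_rfl (Real.rpow_nonneg hu _) (by linarith)

lemma holder_small (a b M ε : ℝ) (ha : 0 < a) (hab : a < b) (hM : 0 ≤ M) (hε : 0 < ε) :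
    ∃ r > 0, ∀ u, 0 ≤ u → u ≤ r → M * u ^ b ≤ ε * u ^ a := by
  refine ⟨(ε / (M + 1)) ^ (1 / (b - a)), Real.rpow_pos_of_pos (by positivity) _, ?_⟩
  intro u hu hur
  rcases eq_or_lt_of_le hu with h0 | h0
  · rw [← h0, Real.zero_rpow (by intro h; rw [h] at hab; linarith : b ≠ 0),
      Real.zero_rpow ha.ne', mul_zero, mul_zero]
  · have e : u ^ b = u ^ (b - a) * u ^ a := by rw [← Real.rpow_add h0]; ring_nf
    rw [e, ← mul_assoc]
    have h2 : u ^ (b - a) ≤ ε / (M + 1) := by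
      calc u ^ (b - a) ≤ ((ε / (M + 1)) ^ (1 / (b - a))) ^ (b - a) :=
            Real.rpow_le_rpow hu hur (by linarith)
        _ = ε / (M + 1) := by
            rw [← Real.rpow_mul (by positivity), one_div,
              inv_mul_cancel₀ (by linarith : b - a ≠ 0), Real.rpow_one]
    have h4 : M * u ^ (b - a) ≤ ε := by
      calc M * u ^ (b - a) ≤ M * (ε / (M + 1)) := mul_le_mul_of_nonneg_left h2 hM
        _ ≤ ε := by
            rw [mul_div_assoc', div_le_iff₀ (by positivity)]
            nlinarith
    exact mul_le_mul h4 le_rfl (Real.rpow_nonneg hu _) hε.le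

/-- compactness of the embedding `D_X^{2β} ↪ D_X^{2α}` for `1/3 < α < β < 1/2`:
every sequence of controlled paths bounded in the `2β`-controlled norm has a subsequence
converging, in the `2α`-controlled norm, to a controlled path in `D_X^{2α}`. -/
theorem controlled_embedding_compact (d : ℕ) (T α β : ℝ)
    (hT : 0 < T) (hα : 1 / 3 < α) (hαβ : α < β) (hβ : β < 1 / 2)
    (X : ℝ → Ed d) (CX : ℝ)
    (hX : ∀ s ∈ Icc (0 : ℝ) T, ∀ t ∈ Icc (0 : ℝ) T, ‖X t - X s‖ ≤ CX * |t - s| ^ α)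
    (Y : ℕ → ℝ → Ed d) (Y' : ℕ → ℝ → (Ed d →L[ℝ] Ed d)) (M : ℝ)
    (hbd0 : ∀ n, ‖Y n 0‖ + ‖Y' n 0‖ ≤ M)
    (hbd1 : ∀ n, ∀ s ∈ Icc (0 : ℝ) T, ∀ t ∈ Icc (0 : ℝ) T,
      ‖Y' n t - Y' n s‖ ≤ M * |t - s| ^ β)
    (hbd2 : ∀ n, ∀ s ∈ Icc (0 : ℝ) T, ∀ t ∈ Icc (0 : ℝ) T,
      ‖remainder X (Y n) (Y' n) s t‖ ≤ M * |t - s| ^ (2 * β)) :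
    ∃ (φ : ℕ → ℕ), StrictMono φ ∧
    ∃ (Z : ℝ → Ed d) (Z' : ℝ → (Ed d →L[ℝ] Ed d)),
      -- the limit lies in `D_X^{2α}`
      (∃ C : ℝ, (∀ s ∈ Icc (0 : ℝ) T, ∀ t ∈ Icc (0 : ℝ) T,
          ‖Z' t - Z' s‖ ≤ C * |t - s| ^ α) ∧
        ∀ s ∈ Icc (0 : ℝ) T, ∀ t ∈ Icc (0 : ℝ) T,
          ‖remainder X Z Z' s t‖ ≤ C * |t - s| ^ (2 * α)) ∧
      -- convergence of the subsequence in the `2α`-controlled norm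
      (∀ ε > (0 : ℝ), ∃ N : ℕ, ∀ k ≥ N,
        ‖Y (φ k) 0 - Z 0‖ ≤ ε ∧ ‖Y' (φ k) 0 - Z' 0‖ ≤ ε ∧
        (∀ s ∈ Icc (0 : ℝ) T, ∀ t ∈ Icc (0 : ℝ) T,
          ‖(Y' (φ k) t - Z' t) - (Y' (φ k) s - Z' s)‖ ≤ ε * |t - s| ^ α) ∧
        (∀ s ∈ Icc (0 : ℝ) T, ∀ t ∈ Icc (0 : ℝ) T,
          ‖remainder X (Y (φ k)) (Y' (φ k)) s t - remainder X Z Z' s t‖ ≤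
            ε * |t - s| ^ (2 * α))) := by
  classical
  have hα0 : 0 < α := by linarith
  have hβ0 : 0 < β := by linarith
  have hα1 : α < 1 := by linarith
  have hM : 0 ≤ M := le_trans (by positivity) (hbd0 0)
  have h0K : (0:ℝ) ∈ Icc (0:ℝ) T := ⟨le_refl 0, hT.le⟩
  have hTK : T ∈ Icc (0:ℝ) T := ⟨hT.le, le_refl T⟩
  set Q : ℝ := max 1 T with hQdef
  have hQ1 : (1:ℝ) ≤ Q := le_max_left _ _
  have hQ0 : (0:ℝ) < Q := by linarith
  have hCX : 0 ≤ CX := by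
    have h := hX 0 h0K T hTK
    have hTα : 0 < |T - 0| ^ α := by
      rw [sub_zero, abs_of_pos hT]; exact Real.rpow_pos_of_pos hT α
    nlinarith [norm_nonneg (X T - X 0)]
  have habs : ∀ s ∈ Icc (0:ℝ) T, ∀ t ∈ Icc (0:ℝ) T, |t - s| ≤ T := by
    intro s hs t ht
    rw [abs_sub_le_iff]
    constructor <;> [skip; skip] <;> linarith [hs.1, hs.2, ht.1, ht.2]
  have hrpowQ : ∀ u : ℝ, 0 ≤ u → u ≤ T → ∀ a : ℝ, 0 < a → a ≤ 1 → u ^ a ≤ Q := by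
    intro u hu huT a ha ha1
    calc u ^ a ≤ Q ^ a := Real.rpow_le_rpow hu (huT.trans (le_max_right _ _)) ha.le
      _ ≤ Q ^ (1:ℝ) := Real.rpow_le_rpow_of_exponent_le hQ1 ha1
      _ = Q := Real.rpow_one _
  have hXbd : ∀ s ∈ Icc (0:ℝ) T, ∀ t ∈ Icc (0:ℝ) T, ‖X t - X s‖ ≤ CX * Q := by
    intro s hs t ht
    refine (hX s hs t ht).trans (mul_le_mul_of_nonneg_left ?_ hCX)
    exact hrpowQ _ (abs_nonneg _) (habs s hs t ht) α hα0 hα1.le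
  -- uniform bound on Y'
  set B' : ℝ := M + M * Q with hB'def
  have hB'0 : 0 ≤ B' := by nlinarith
  have hY'bd : ∀ n, ∀ t ∈ Icc (0:ℝ) T, ‖Y' n t‖ ≤ B' := by
    intro n t ht
    have h1 := hbd1 n 0 h0K t ht
    have h2 : |t - 0| ^ β ≤ Q := by
      refine hrpowQ _ (abs_nonneg _) ?_ β hβ0 (by linarith)
      rw [sub_zero, abs_of_nonneg ht.1]; exact ht.2
    have h3 : ‖Y' n 0‖ ≤ M := by linarith [norm_nonneg (Y n 0), hbd0 n]
    calc ‖Y' n t‖ = ‖Y' n 0 + (Y' n t - Y' n 0)‖ := by congr 1; abel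
      _ ≤ ‖Y' n 0‖ + ‖Y' n t - Y' n 0‖ := norm_add_le _ _
      _ ≤ M + M * |t - 0| ^ β := add_le_add h3 h1
      _ ≤ B' := by nlinarith
  -- Hölder bound for Y
  set C1 : ℝ := B' * CX + M * Q with hC1def
  have hC10 : 0 ≤ C1 := by nlinarith
  have hYh : ∀ n, ∀ s ∈ Icc (0:ℝ) T, ∀ t ∈ Icc (0:ℝ) T,
      ‖Y n t - Y n s‖ ≤ C1 * |t - s| ^ α := by
    intro n s hs t ht
    have hid : Y n t - Y n s = Y' n s (X t - X s) + remainder X (Y n) (Y' n) s t := by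
      simp only [remainder]; abel
    rw [hid]
    have h1 : ‖Y' n s (X t - X s)‖ ≤ B' * CX * |t - s| ^ α := by
      calc ‖Y' n s (X t - X s)‖ ≤ ‖Y' n s‖ * ‖X t - X s‖ :=
            ContinuousLinearMap.le_opNorm _ _
        _ ≤ B' * (CX * |t - s| ^ α) :=
            mul_le_mul (hY'bd n s hs) (hX s hs t ht) (norm_nonneg _) hB'0
        _ = B' * CX * |t - s| ^ α := by ring
    have h2 : ‖remainder X (Y n) (Y' n) s t‖ ≤ M * Q * |t - s| ^ α := by
      refine (hbd2 n s hs t ht).trans ?_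
      have := rpow_exp_le T |t - s| α (2*β) (abs_nonneg _) (habs s hs t ht) hα0
        (by linarith) (by linarith)
      calc M * |t - s| ^ (2*β) ≤ M * (Q * |t - s| ^ α) := mul_le_mul_of_nonneg_left this hM
        _ = M * Q * |t - s| ^ α := by ring
    calc ‖Y' n s (X t - X s) + remainder X (Y n) (Y' n) s t‖
        ≤ ‖Y' n s (X t - X s)‖ + ‖remainder X (Y n) (Y' n) s t‖ := norm_add_le _ _
      _ ≤ B' * CX * |t - s| ^ α + M * Q * |t - s| ^ α := add_le_add h1 h2
      _ = C1 * |t - s| ^ α := by ring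
  -- uniform bound on Y
  have hYbd : ∀ n, ∀ t ∈ Icc (0:ℝ) T, ‖Y n t‖ ≤ M + C1 * Q := by
    intro n t ht
    have h1 := hYh n 0 h0K t ht
    have h2 : |t - 0| ^ α ≤ Q := by
      refine hrpowQ _ (abs_nonneg _) ?_ α hα0 hα1.le
      rw [sub_zero, abs_of_nonneg ht.1]; exact ht.2
    have h3 : ‖Y n 0‖ ≤ M := by linarith [norm_nonneg (Y' n 0), hbd0 n]
    calc ‖Y n t‖ = ‖Y n 0 + (Y n t - Y n 0)‖ := by congr 1; abel
      _ ≤ ‖Y n 0‖ + ‖Y n t - Y n 0‖ := norm_add_le _ _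
      _ ≤ M + C1 * |t - 0| ^ α := add_le_add h3 h1
      _ ≤ M + C1 * Q := by nlinarith
  -- α-Hölder bound for Y'
  have hY'h : ∀ n, ∀ s ∈ Icc (0:ℝ) T, ∀ t ∈ Icc (0:ℝ) T,
      ‖Y' n t - Y' n s‖ ≤ M * Q * |t - s| ^ α := by
    intro n s hs t ht
    refine (hbd1 n s hs t ht).trans ?_
    have := rpow_exp_le T |t - s| α β (abs_nonneg _) (habs s hs t ht) hα0
      (by linarith) (by linarith)
    calc M * |t - s| ^ β ≤ M * (Q * |t - s| ^ α) := mul_le_mul_of_nonneg_left this hM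
      _ = M * Q * |t - s| ^ α := by ring
  -- function space setup
  have hcontY : ∀ n, Continuous ((Icc (0:ℝ) T).restrict (Y n)) := fun n =>
    (continuousOn_of_holder hα0 (hYh n)).restrict
  have hcontY' : ∀ n, Continuous ((Icc (0:ℝ) T).restrict (Y' n)) := fun n =>
    (continuousOn_of_holder (by linarith : (0:ℝ) < α)
      (fun s hs t ht => (hY'h n s hs t ht))).restrict
  let g : ∀ _ : ℕ, C(↥(Icc (0:ℝ) T), (Ed d) × (Ed d →L[ℝ] Ed d)) := fun n =>
    ⟨fun x => (Y n x, Y' n x), (hcontY n).prodMk (hcontY' n)⟩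
  let fbc : ℕ → (↥(Icc (0:ℝ) T) →ᵇ ((Ed d) × (Ed d →L[ℝ] Ed d))) := fun n =>
    BoundedContinuousFunction.mkOfCompact (g n)
  set Ceq : ℝ := max C1 (M * Q) with hCeqdef
  have hCeq0 : 0 ≤ Ceq := le_trans hC10 (le_max_left _ _)
  have hmodH : ∀ (x y : ↥(Icc (0:ℝ) T)) (n : ℕ),
      dist ((fbc n) x) ((fbc n) y) ≤ Ceq * |dist x y| ^ α := by
    intro x y n
    have hdd : |dist x y| = |(x:ℝ) - (y:ℝ)| := by
      rw [Subtype.dist_eq, Real.dist_eq, abs_abs]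
    have hx2 := x.2; have hy2 := y.2
    rw [Prod.dist_eq]
    apply max_le
    · rw [dist_eq_norm, hdd]
      refine (hYh n y hy2 x hx2).trans ?_
      exact mul_le_mul_of_nonneg_right (le_max_left _ _) (Real.rpow_nonneg (abs_nonneg _) _)
    · rw [dist_eq_norm, hdd]
      refine (hY'h n y hy2 x hx2).trans ?_
      exact mul_le_mul_of_nonneg_right (le_max_right _ _) (Real.rpow_nonneg (abs_nonneg _) _)
  have hmodlim : Tendsto (fun u : ℝ => Ceq * |u| ^ α) (𝓝 0) (𝓝 0) := by
    have := rpow_abs_tendsto Ceq α 0 hα0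
    simpa using this
  have hA : Equicontinuous ((↑) : (Set.range fbc) → ↥(Icc (0:ℝ) T) → ((Ed d) × (Ed d →L[ℝ] Ed d))) := by
    apply UniformEquicontinuous.equicontinuous
    apply Metric.uniformEquicontinuous_of_continuity_modulus (fun u => Ceq * |u| ^ α) hmodlim
    intro x y i
    obtain ⟨n, hn⟩ := i.2
    rw [← hn]
    exact hmodH x y n
  have hcomp : IsCompact (closure (Set.range fbc)) := by
    refine BoundedContinuousFunction.arzela_ascoli
      (Metric.closedBall (0 : (Ed d) × (Ed d →L[ℝ] Ed d)) (max (M + C1 * Q) B'))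
      (isCompact_closedBall _ _) _ ?_ hA
    rintro f x ⟨n, rfl⟩
    rw [Metric.mem_closedBall, dist_zero_right]
    have : ‖(fbc n) x‖ = max ‖Y n x‖ ‖Y' n x‖ := by
      rw [Prod.norm_def]; rfl
    rw [this]
    exact max_le_max (hYbd n x x.2) (hY'bd n x x.2)
  obtain ⟨F, _, φ, hφ, hFtend⟩ :=
    hcomp.tendsto_subseq (fun n => subset_closure (Set.mem_range_self (f := fbc) n))
  have hδ : Tendsto (fun k => dist (fbc (φ k)) F) atTop (𝓝 0) := by
    rw [tendsto_iff_dist_tendsto_zero] at hFtend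
    exact hFtend
  have hNε : ∀ ε > (0:ℝ), ∃ N, ∀ k ≥ N, dist (fbc (φ k)) F < ε := by
    intro ε hε
    obtain ⟨N, hN⟩ := Metric.tendsto_atTop.mp hδ ε hε
    refine ⟨N, fun k hk => ?_⟩
    have := hN k hk
    rwa [Real.dist_eq, sub_zero, abs_of_nonneg dist_nonneg] at this
  -- the limit functions
  let Z : ℝ → Ed d := fun t => (F (Set.projIcc 0 T hT.le t)).1
  let Z' : ℝ → (Ed d →L[ℝ] Ed d) := fun t => (F (Set.projIcc 0 T hT.le t)).2
  have hpt : ∀ k, ∀ t, ∀ ht : t ∈ Icc (0:ℝ) T,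
      ‖Y (φ k) t - Z t‖ ≤ dist (fbc (φ k)) F ∧
      ‖Y' (φ k) t - Z' t‖ ≤ dist (fbc (φ k)) F := by
    intro k t ht
    have h1 : dist ((fbc (φ k)) ⟨t, ht⟩) (F ⟨t, ht⟩) ≤ dist (fbc (φ k)) F :=
      BoundedContinuousFunction.dist_coe_le_dist _
    rw [Prod.dist_eq] at h1
    have hZ1 : Z t = (F ⟨t, ht⟩).1 := by
      simp only [Z, Set.projIcc_of_mem hT.le ht]
    have hZ2 : Z' t = (F ⟨t, ht⟩).2 := by
      simp only [Z', Set.projIcc_of_mem hT.le ht]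
    have hc1 : ((fbc (φ k)) ⟨t, ht⟩).1 = Y (φ k) t := rfl
    have hc2 : ((fbc (φ k)) ⟨t, ht⟩).2 = Y' (φ k) t := rfl
    constructor
    · rw [hZ1, ← hc1, ← dist_eq_norm]
      exact le_trans (le_max_left _ _) h1
    · rw [hZ2, ← hc2, ← dist_eq_norm]
      exact le_trans (le_max_right _ _) h1
  -- difference of remainders
  have hRdiff : ∀ k, ∀ s ∈ Icc (0:ℝ) T, ∀ t ∈ Icc (0:ℝ) T,
      ‖remainder X (Y (φ k)) (Y' (φ k)) s t - remainder X Z Z' s t‖ ≤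
        (2 + CX * Q) * dist (fbc (φ k)) F := by
    intro k s hs t ht
    have hid : remainder X (Y (φ k)) (Y' (φ k)) s t - remainder X Z Z' s t
        = ((Y (φ k) t - Z t) - (Y (φ k) s - Z s)) - ((Y' (φ k) s - Z' s) (X t - X s)) := by
      simp only [remainder, ContinuousLinearMap.sub_apply]; abel
    rw [hid]
    have h3 : ‖(Y' (φ k) s - Z' s) (X t - X s)‖ ≤ dist (fbc (φ k)) F * (CX * Q) := by
      calc ‖(Y' (φ k) s - Z' s) (X t - X s)‖ ≤ ‖Y' (φ k) s - Z' s‖ * ‖X t - X s‖ :=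
            ContinuousLinearMap.le_opNorm _ _
        _ ≤ dist (fbc (φ k)) F * (CX * Q) :=
            mul_le_mul ((hpt k s hs).2) (hXbd s hs t ht) (norm_nonneg _) dist_nonneg
    calc ‖((Y (φ k) t - Z t) - (Y (φ k) s - Z s)) - ((Y' (φ k) s - Z' s) (X t - X s))‖
        ≤ ‖(Y (φ k) t - Z t) - (Y (φ k) s - Z s)‖ + ‖(Y' (φ k) s - Z' s) (X t - X s)‖ :=
          norm_sub_le _ _
      _ ≤ (‖Y (φ k) t - Z t‖ + ‖Y (φ k) s - Z s‖) + dist (fbc (φ k)) F * (CX * Q) :=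
          add_le_add (norm_sub_le _ _) h3
      _ ≤ (dist (fbc (φ k)) F + dist (fbc (φ k)) F) + dist (fbc (φ k)) F * (CX * Q) :=
          add_le_add (add_le_add (hpt k t ht).1 (hpt k s hs).1) le_rfl
      _ = (2 + CX * Q) * dist (fbc (φ k)) F := by ring
  -- Hölder bounds for the limit
  have hZ'h : ∀ s ∈ Icc (0:ℝ) T, ∀ t ∈ Icc (0:ℝ) T, ‖Z' t - Z' s‖ ≤ M * |t - s| ^ β := by
    intro s hs t ht
    refine le_of_forall_pos_le_add ?_
    intro ε hε
    obtain ⟨N, hN⟩ := hNε (ε/2) (by positivity)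
    have hd := hN N le_rfl
    have h1 := (hpt N s hs).2
    have h2 := (hpt N t ht).2
    have hid : Z' t - Z' s
        = (Z' t - Y' (φ N) t) + (Y' (φ N) t - Y' (φ N) s) + (Y' (φ N) s - Z' s) := by abel
    calc ‖Z' t - Z' s‖
        ≤ ‖Z' t - Y' (φ N) t‖ + ‖Y' (φ N) t - Y' (φ N) s‖ + ‖Y' (φ N) s - Z' s‖ := by
          rw [hid]; exact norm_add₃_le
      _ ≤ ε/2 + M * |t - s| ^ β + ε/2 := by
          refine add_le_add (add_le_add ?_ (hbd1 (φ N) s hs t ht)) (h1.trans hd.le)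
          rw [norm_sub_rev]; exact h2.trans hd.le
      _ = M * |t - s| ^ β + ε := by ring
  have hZrem : ∀ s ∈ Icc (0:ℝ) T, ∀ t ∈ Icc (0:ℝ) T,
      ‖remainder X Z Z' s t‖ ≤ M * |t - s| ^ (2 * β) := by
    intro s hs t ht
    refine le_of_forall_pos_le_add ?_
    intro ε hε
    obtain ⟨N, hN⟩ := hNε (ε / (3 + CX * Q)) (by positivity)
    have hd := hN N le_rfl
    calc ‖remainder X Z Z' s t‖
        ≤ ‖remainder X (Y (φ N)) (Y' (φ N)) s t‖ +
          ‖remainder X (Y (φ N)) (Y' (φ N)) s t - remainder X Z Z' s t‖ := by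
          have hid : remainder X Z Z' s t = remainder X (Y (φ N)) (Y' (φ N)) s t -
              (remainder X (Y (φ N)) (Y' (φ N)) s t - remainder X Z Z' s t) := by abel
          conv_lhs => rw [hid]
          exact norm_sub_le _ _
      _ ≤ M * |t - s| ^ (2*β) + (2 + CX * Q) * (ε / (3 + CX * Q)) := by
          refine add_le_add (hbd2 (φ N) s hs t ht) ?_
          exact (hRdiff N s hs t ht).trans
            (mul_le_mul_of_nonneg_left hd.le (by nlinarith))
      _ ≤ M * |t - s| ^ (2*β) + ε := by
          have h5 : (2 + CX * Q) * (ε / (3 + CX * Q)) ≤ ε := by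
            rw [mul_div_assoc', div_le_iff₀ (by positivity)]
            nlinarith
          linarith
  -- conclusion
  refine ⟨φ, hφ, Z, Z', ⟨M * Q, ?_, ?_⟩, ?_⟩
  · intro s hs t ht
    refine (hZ'h s hs t ht).trans ?_
    have := rpow_exp_le T |t - s| α β (abs_nonneg _) (habs s hs t ht) hα0
      (by linarith) (by linarith)
    calc M * |t - s| ^ β ≤ M * (Q * |t - s| ^ α) := mul_le_mul_of_nonneg_left this hM
      _ = M * Q * |t - s| ^ α := by ring
  · intro s hs t ht
    refine (hZrem s hs t ht).trans ?_
    have := rpow_exp_le T |t - s| (2*α) (2*β) (abs_nonneg _) (habs s hs t ht)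
      (by linarith) (by linarith) (by linarith)
    calc M * |t - s| ^ (2*β) ≤ M * (Q * |t - s| ^ (2*α)) := mul_le_mul_of_nonneg_left this hM
      _ = M * Q * |t - s| ^ (2*α) := by ring
  · intro ε hε
    obtain ⟨r1, hr1, hsm1⟩ := holder_small α β (2*M) ε hα0 hαβ (by linarith) hε
    obtain ⟨r2, hr2, hsm2⟩ := holder_small (2*α) (2*β) (2*M) ε (by linarith) (by linarith)
      (by linarith) hε
    have hr1α : (0:ℝ) < r1 ^ α := Real.rpow_pos_of_pos hr1 _
    have hr2α : (0:ℝ) < r2 ^ (2*α) := Real.rpow_pos_of_pos hr2 _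
    set m : ℝ := min ε (min (ε * r1 ^ α / 3) (ε * r2 ^ (2*α) / (3 + CX * Q))) with hmdef
    have hm0 : 0 < m := by
      refine lt_min hε (lt_min (by positivity) (by positivity))
    obtain ⟨N, hN⟩ := hNε m hm0
    refine ⟨N, fun k hk => ?_⟩
    have hd : dist (fbc (φ k)) F ≤ m := (hN k hk).le
    have hdε : dist (fbc (φ k)) F ≤ ε := hd.trans (min_le_left _ _)
    have hd1 : dist (fbc (φ k)) F ≤ ε * r1 ^ α / 3 :=
      hd.trans ((min_le_right _ _).trans (min_le_left _ _))
    have hd2 : dist (fbc (φ k)) F ≤ ε * r2 ^ (2*α) / (3 + CX * Q) :=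
      hd.trans ((min_le_right _ _).trans (min_le_right _ _))
    refine ⟨(hpt k 0 h0K).1.trans hdε, (hpt k 0 h0K).2.trans hdε, ?_, ?_⟩
    · intro s hs t ht
      by_cases hle : |t - s| ≤ r1
      · have hid : (Y' (φ k) t - Z' t) - (Y' (φ k) s - Z' s)
            = (Y' (φ k) t - Y' (φ k) s) - (Z' t - Z' s) := by abel
        calc ‖(Y' (φ k) t - Z' t) - (Y' (φ k) s - Z' s)‖
            ≤ ‖Y' (φ k) t - Y' (φ k) s‖ + ‖Z' t - Z' s‖ := by rw [hid]; exact norm_sub_le _ _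
          _ ≤ M * |t - s| ^ β + M * |t - s| ^ β :=
              add_le_add (hbd1 (φ k) s hs t ht) (hZ'h s hs t ht)
          _ = 2 * M * |t - s| ^ β := by ring
          _ ≤ ε * |t - s| ^ α := hsm1 _ (abs_nonneg _) hle
      · push_neg at hle
        have hpow : r1 ^ α ≤ |t - s| ^ α :=
          Real.rpow_le_rpow hr1.le hle.le hα0.le
        calc ‖(Y' (φ k) t - Z' t) - (Y' (φ k) s - Z' s)‖
            ≤ ‖Y' (φ k) t - Z' t‖ + ‖Y' (φ k) s - Z' s‖ := norm_sub_le _ _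
          _ ≤ dist (fbc (φ k)) F + dist (fbc (φ k)) F :=
              add_le_add (hpt k t ht).2 (hpt k s hs).2
          _ ≤ ε * r1 ^ α / 3 + ε * r1 ^ α / 3 := add_le_add hd1 hd1
          _ ≤ ε * r1 ^ α := by nlinarith
          _ ≤ ε * |t - s| ^ α := mul_le_mul_of_nonneg_left hpow hε.le
    · intro s hs t ht
      by_cases hle : |t - s| ≤ r2
      · calc ‖remainder X (Y (φ k)) (Y' (φ k)) s t - remainder X Z Z' s t‖
            ≤ ‖remainder X (Y (φ k)) (Y' (φ k)) s t‖ + ‖remainder X Z Z' s t‖ :=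
              norm_sub_le _ _
          _ ≤ M * |t - s| ^ (2*β) + M * |t - s| ^ (2*β) :=
              add_le_add (hbd2 (φ k) s hs t ht) (hZrem s hs t ht)
          _ = 2 * M * |t - s| ^ (2*β) := by ring
          _ ≤ ε * |t - s| ^ (2*α) := hsm2 _ (abs_nonneg _) hle
      · push_neg at hle
        have hpow : r2 ^ (2*α) ≤ |t - s| ^ (2*α) :=
          Real.rpow_le_rpow hr2.le hle.le (by linarith)
        calc ‖remainder X (Y (φ k)) (Y' (φ k)) s t - remainder X Z Z' s t‖
            ≤ (2 + CX * Q) * dist (fbc (φ k)) F := hRdiff k s hs t ht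
          _ ≤ (2 + CX * Q) * (ε * r2 ^ (2*α) / (3 + CX * Q)) :=
              mul_le_mul_of_nonneg_left hd2 (by nlinarith)
          _ ≤ ε * r2 ^ (2*α) := by
              rw [mul_div_assoc', div_le_iff₀ (by positivity)]
              nlinarith
          _ ≤ ε * |t - s| ^ (2*α) := mul_le_mul_of_nonneg_left hpow hε.le
end
end
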